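/- arXiv:1107.5914 — 3 statements merged into one kernel-verified Lean document; each statement's English description precedes it below -/
import Mathlib

section
/- Along solutions of the chemostat system, the quantity z2 = s2 + x2 - x1 satisfies z2(t) = s2in + (z2(0) - s2in)e^{-Dt}; consequently s2(t) + x2(t) - x1(t) → s2in as t → ∞, and all components of the solution are bounded on [0,∞). -/
/-!
Adding the equations gives `(s₁ + x₁)' = D (s₁ⁱⁿ - (s₁ + x₁))` and
`(s₂ + x₂ - x₁)' = D (s₂ⁱⁿ - (s₂ + x₂ - x₁))`, so both quantities relax exponentially to their
inflow values; in particular they are bounded above on `[0, ∞)`. The solution stays in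
the nonnegative orthant: `x₁, x₂` solve linear equations `x' = a(t) x`, so they cannot cross
zero (Grönwall), while at `s₁ = 0` or `s₂ = 0` the vector field points strictly inward because
`f₁(0, ·) = 0`, `f₂(·, 0) = 0`. Nonnegativity turns the two upper bounds into bounds on every
component.
-/

open Filter Real Set

theorem eq_exp_decay_of_hasDerivAt {D c : ℝ} {z : ℝ → ℝ}
    (hz : ∀ t, 0 ≤ t → HasDerivAt z (D * (c - z t)) t) :
    ∀ t, 0 ≤ t → z t = c + (z 0 - c) * exp (-D * t) := by
  intro t ht
  have hg : ∀ u, 0 ≤ u → HasDerivAt (fun u => (z u - c) * exp (D * u)) 0 u := fun u hu =>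
    (((hz u hu).sub_const c).mul ((hasDerivAt_id u).const_mul D).exp).congr_deriv
      (by simp only [id, mul_one]; ring)
  have hconst : (z t - c) * exp (D * t) = z 0 - c := by
    simpa using constant_of_has_deriv_right_zero
      (fun u hu => (hg u hu.1).continuousAt.continuousWithinAt)
      (fun u hu => (hg u hu.1).hasDerivWithinAt) t ⟨ht, le_rfl⟩
  calc z t = c + (z t - c) * exp (D * t) * exp (-D * t) := by
        rw [mul_assoc, ← exp_add, neg_mul, add_neg_cancel, exp_zero]; ring
    _ = c + (z 0 - c) * exp (-D * t) := by rw [hconst]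

theorem nonneg_of_hasDerivAt_mul_self {a x : ℝ → ℝ}
    (hx : ∀ t, 0 ≤ t → HasDerivAt x (a t * x t) t) (ha : ContinuousOn a (Ici 0))
    (h0 : 0 ≤ x 0) : ∀ t, 0 ≤ t → 0 ≤ x t := by
  intro t ht
  by_contra! hneg
  have hxc : ContinuousOn x (Icc 0 t) := fun u hu =>
    (hx u hu.1).continuousAt.continuousWithinAt
  -- `x` vanishes at some `T ≤ t`, and uniqueness from `T` on forces `x t = 0`.
  obtain ⟨T, hT, hxT⟩ := intermediate_value_Icc' ht hxc ⟨hneg.le, h0⟩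
  have hTt : Icc T t ⊆ Ici 0 := fun u hu => hT.1.trans hu.1
  obtain ⟨K, hK⟩ := isCompact_Icc.exists_bound_of_continuousOn (ha.mono hTt)
  have hzero := eq_zero_of_abs_deriv_le_mul_abs_self_of_eq_zero_right
    (hxc.mono fun u hu => ⟨hTt hu, hu.2⟩)
    (fun u hu => (hx u (hTt (Ico_subset_Icc_self hu))).hasDerivWithinAt)
    hxT (K := K) (fun u hu => by
      rw [norm_mul]
      exact mul_le_mul_of_nonneg_right (hK u (Ico_subset_Icc_self hu)) (norm_nonneg _))
  exact hneg.ne (hzero t ⟨hT.2, le_rfl⟩)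

theorem nonneg_of_hasDerivAt_pos_of_eq_zero {w w' : ℝ → ℝ}
    (hw : ∀ t, 0 ≤ t → HasDerivAt w (w' t) t) (h0 : 0 ≤ w 0)
    (hpos : ∀ t, 0 ≤ t → w t = 0 → 0 < w' t) : ∀ t, 0 ≤ t → 0 ≤ w t := by
  intro t ht
  have hfence := image_le_of_deriv_right_lt_deriv_boundary (f := fun u => -w u) (B' := 0)
    (fun u hu => (hw u hu.1).neg.continuousAt.continuousWithinAt)
    (fun u hu => (hw u hu.1).neg.hasDerivWithinAt) (neg_nonpos.mpr h0)
    (fun _ => hasDerivAt_const _ _)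
    (fun u hu hwu => neg_neg_of_pos (hpos u hu.1 (neg_eq_zero.mp hwu)))
    ⟨ht, le_rfl⟩
  exact neg_nonpos.mp hfence

theorem add_mul_exp_neg_mul_le_add_abs (c k : ℝ) {D t : ℝ} (hD : 0 ≤ D) (ht : 0 ≤ t) :
    c + k * exp (-D * t) ≤ c + |k| := by
  have hexp : exp (-D * t) ≤ 1 := exp_le_one_iff.mpr (by nlinarith)
  have := mul_le_mul (le_abs_self k) hexp (exp_pos _).le (abs_nonneg k)
  linarith

theorem tendsto_add_mul_exp_neg_mul (c k : ℝ) {D : ℝ} (hD : 0 < D) :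
    Tendsto (fun t => c + k * exp (-D * t)) atTop (nhds c) := by
  have hexp : Tendsto (fun t => exp (-D * t)) atTop (nhds 0) :=
    tendsto_exp_atBot.comp (tendsto_id.const_mul_atTop_of_neg (neg_neg_of_pos hD))
  simpa using (hexp.const_mul k).const_add c

theorem stmt_2_general
    (D s1in s2in : ℝ) (hD : 0 < D) (hs1in : 0 < s1in) (hs2in : 0 < s2in)
    (f1 f2 : ℝ → ℝ → ℝ)
    (hf1C1 : ContDiff ℝ 1 (fun p : ℝ × ℝ => f1 p.1 p.2))
    (hf2C1 : ContDiff ℝ 1 (fun p : ℝ × ℝ => f2 p.1 p.2))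
    (hf1nonneg : ∀ u v : ℝ, 0 ≤ f1 u v)
    (hf10 : ∀ v : ℝ, f1 0 v = 0)
    (hf20 : ∀ u : ℝ, f2 u 0 = 0)
    (s1 x1 s2 x2 : ℝ → ℝ)
    (hinit : 0 ≤ s1 0 ∧ 0 ≤ x1 0 ∧ 0 ≤ s2 0 ∧ 0 ≤ x2 0)
    (hode1 : ∀ t : ℝ, 0 ≤ t →
      HasDerivAt s1 (D * (s1in - s1 t) - f1 (s1 t) (s2 t) * x1 t) t)
    (hode2 : ∀ t : ℝ, 0 ≤ t →
      HasDerivAt x1 ((f1 (s1 t) (s2 t) - D) * x1 t) t)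
    (hode3 : ∀ t : ℝ, 0 ≤ t →
      HasDerivAt s2 (D * (s2in - s2 t) - f2 (s1 t) (s2 t) * x2 t
        + f1 (s1 t) (s2 t) * x1 t) t)
    (hode4 : ∀ t : ℝ, 0 ≤ t →
      HasDerivAt x2 ((f2 (s1 t) (s2 t) - D) * x2 t) t) :
    (∀ t : ℝ, 0 ≤ t →
      s2 t + x2 t - x1 t = s2in + (s2 0 + x2 0 - x1 0 - s2in) * Real.exp (-D * t)) ∧
    Tendsto (fun t => s2 t + x2 t - x1 t) atTop (nhds s2in) ∧
    (∃ B : ℝ, ∀ t : ℝ, 0 ≤ t →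
      |s1 t| ≤ B ∧ |x1 t| ≤ B ∧ |s2 t| ≤ B ∧ |x2 t| ≤ B) := by
  obtain ⟨hs10, hx10, hs20, hx20⟩ := hinit
  have hz1 := eq_exp_decay_of_hasDerivAt (c := s1in) (z := fun t => s1 t + x1 t)
    fun t ht => ((hode1 t ht).add (hode2 t ht)).congr_deriv (by ring)
  have hz2 := eq_exp_decay_of_hasDerivAt (c := s2in) (z := fun t => s2 t + x2 t - x1 t)
    fun t ht => (((hode3 t ht).add (hode4 t ht)).sub (hode2 t ht)).congr_deriv (by ring)
  have hS : ContinuousOn (fun t => (s1 t, s2 t)) (Ici 0) := fun t ht =>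
    ((hode1 t ht).continuousAt.prodMk (hode3 t ht).continuousAt).continuousWithinAt
  have hx1 := nonneg_of_hasDerivAt_mul_self hode2
    ((hf1C1.continuous.comp_continuousOn hS).sub continuousOn_const) hx10
  have hx2 := nonneg_of_hasDerivAt_mul_self hode4
    ((hf2C1.continuous.comp_continuousOn hS).sub continuousOn_const) hx20
  have hs1 := nonneg_of_hasDerivAt_pos_of_eq_zero hode1 hs10 fun t _ h => by
    simpa [h, hf10] using mul_pos hD hs1in
  have hs2 := nonneg_of_hasDerivAt_pos_of_eq_zero hode3 hs20 fun t ht h => by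
    rw [h, hf20]
    nlinarith [mul_nonneg (hf1nonneg (s1 t) 0) (hx1 t ht), mul_pos hD hs2in]
  refine ⟨hz2, ?_, ?_⟩
  · refine (tendsto_add_mul_exp_neg_mul s2in (s2 0 + x2 0 - x1 0 - s2in) hD).congr' ?_
    filter_upwards [eventually_ge_atTop 0] with t ht using (hz2 t ht).symm
  · set M1 := s1in + |s1 0 + x1 0 - s1in|
    set M2 := s2in + |s2 0 + x2 0 - x1 0 - s2in|
    refine ⟨M1 + |M2|, fun t ht => ?_⟩
    have h1 : s1 t + x1 t ≤ M1 :=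
      (hz1 t ht).trans_le (add_mul_exp_neg_mul_le_add_abs _ _ hD.le ht)
    have h2 : s2 t + x2 t - x1 t ≤ M2 :=
      (hz2 t ht).trans_le (add_mul_exp_neg_mul_le_add_abs _ _ hD.le ht)
    have hM2 := le_abs_self M2
    rw [abs_of_nonneg (hs1 t ht), abs_of_nonneg (hx1 t ht), abs_of_nonneg (hs2 t ht),
      abs_of_nonneg (hx2 t ht)]
    refine ⟨?_, ?_, ?_, ?_⟩ <;> linarith [hs1 t ht, hx1 t ht, hs2 t ht, hx2 t ht, abs_nonneg M2]

/-- z2 = s2 + x2 - x1 satisfies z2(t) = s2in + (z2(0) - s2in)e^{-Dt},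
hence s2 + x2 - x1 → s2in, and all components are bounded on [0,∞). -/
theorem stmt_2
    (D s1in s2in : ℝ) (hD : 0 < D) (hs1in : 0 < s1in) (hs2in : 0 < s2in)
    (f1 f2 : ℝ → ℝ → ℝ)
    (hf1C1 : ContDiff ℝ 1 (fun p : ℝ × ℝ => f1 p.1 p.2))
    (hf2C1 : ContDiff ℝ 1 (fun p : ℝ × ℝ => f2 p.1 p.2))
    (hf1nonneg : ∀ u v : ℝ, 0 ≤ f1 u v)
    (hf2nonneg : ∀ u v : ℝ, 0 ≤ f2 u v)
    (hf10 : ∀ v : ℝ, f1 0 v = 0)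
    (hf20 : ∀ u : ℝ, f2 u 0 = 0)
    (s1 x1 s2 x2 : ℝ → ℝ)
    (hinit : 0 ≤ s1 0 ∧ 0 ≤ x1 0 ∧ 0 ≤ s2 0 ∧ 0 ≤ x2 0)
    (hode1 : ∀ t : ℝ, 0 ≤ t →
      HasDerivAt s1 (D * (s1in - s1 t) - f1 (s1 t) (s2 t) * x1 t) t)
    (hode2 : ∀ t : ℝ, 0 ≤ t →
      HasDerivAt x1 ((f1 (s1 t) (s2 t) - D) * x1 t) t)
    (hode3 : ∀ t : ℝ, 0 ≤ t →
      HasDerivAt s2 (D * (s2in - s2 t) - f2 (s1 t) (s2 t) * x2 t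
        + f1 (s1 t) (s2 t) * x1 t) t)
    (hode4 : ∀ t : ℝ, 0 ≤ t →
      HasDerivAt x2 ((f2 (s1 t) (s2 t) - D) * x2 t) t) :
    (∀ t : ℝ, 0 ≤ t →
      s2 t + x2 t - x1 t = s2in + (s2 0 + x2 0 - x1 0 - s2in) * Real.exp (-D * t)) ∧
    Tendsto (fun t => s2 t + x2 t - x1 t) atTop (nhds s2in) ∧
    (∃ B : ℝ, ∀ t : ℝ, 0 ≤ t →
      |s1 t| ≤ B ∧ |x1 t| ≤ B ∧ |s2 t| ≤ B ∧ |x2 t| ≤ B) :=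
  stmt_2_general D s1in s2in hD hs1in hs2in f1 f2 hf1C1 hf2C1 hf1nonneg hf10 hf20 s1 x1 s2 x2 hinit
    hode1 hode2 hode3 hode4
end

section
/- The set Ω = {(s1,x1,s2,x2) ∈ ℝ₊⁴ : s1 + x1 = s1in and s2 + x2 = x1 + s2in} is positively invariant for the chemostat system. -/
/-!
Both nonnegativity of the biomasses and the two conservation laws come from the scalar linear
equation `y' = a(t) y`, whose solutions are `y 0 * exp (∫ a)` and so keep the sign of `y 0`:
`x1, x2` solve it with `a = f_i(s1, s2) - D`, and `s1 + x1 - s1in`, `s2 + x2 - x1 - s2in`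
solve it with `a = -D`. The substrates stay nonnegative because `f1 (0, s2) = 0` and
`f2 (s1, 0) = 0` make the vector field point strictly inwards on `s1 = 0` and `s2 = 0`.
-/

open Set

theorem exists_hasDerivAt_eq_of_continuousOn_Ici {a : ℝ → ℝ} (ha : ContinuousOn a (Ici 0)) :
    ∃ A : ℝ → ℝ, A 0 = 0 ∧ ∀ t, 0 ≤ t → HasDerivAt A (a t) t := by
  have hext : Continuous fun t => a (max t 0) :=
    ha.comp_continuous (continuous_id.max continuous_const) fun t => le_max_right t 0
  refine ⟨fun t => ∫ u in (0 : ℝ)..t, a (max u 0), by simp, fun t ht => ?_⟩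
  simpa [max_eq_left ht] using (hext.integral_hasStrictDerivAt 0 t).hasDerivAt

theorem exists_eq_mul_exp_of_hasDerivAt_mul {a y : ℝ → ℝ} (ha : ContinuousOn a (Ici 0))
    (hy : ∀ t, 0 ≤ t → HasDerivAt y (a t * y t) t) :
    ∃ A : ℝ → ℝ, ∀ t, 0 ≤ t → y t = y 0 * Real.exp (A t) := by
  obtain ⟨A, hA0, hA⟩ := exists_hasDerivAt_eq_of_continuousOn_Ici ha
  refine ⟨A, fun T hT => ?_⟩
  have hg : ∀ t, 0 ≤ t → HasDerivAt (fun t => y t * Real.exp (-A t)) 0 t := fun t ht =>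
    ((hy t ht).mul (hA t ht).neg.exp).congr_deriv (by simp only [Pi.neg_apply]; ring)
  have hconst := constant_of_has_deriv_right_zero
    (fun t ht => (hg t ht.1).continuousAt.continuousWithinAt)
    (fun t ht => (hg t ht.1).hasDerivWithinAt) T ⟨hT, le_rfl⟩
  simp only [hA0, neg_zero, Real.exp_zero, mul_one] at hconst
  rw [← hconst, mul_assoc, ← Real.exp_add, neg_add_cancel, Real.exp_zero, mul_one]

theorem nonneg_of_hasDerivAt_mul {a y : ℝ → ℝ} (ha : ContinuousOn a (Ici 0))
    (hy : ∀ t, 0 ≤ t → HasDerivAt y (a t * y t) t) (h0 : 0 ≤ y 0) :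
    ∀ t, 0 ≤ t → 0 ≤ y t := by
  obtain ⟨A, hA⟩ := exists_eq_mul_exp_of_hasDerivAt_mul ha hy
  intro t ht
  rw [hA t ht]
  positivity

theorem eq_zero_of_hasDerivAt_const_mul {c : ℝ} {y : ℝ → ℝ}
    (hy : ∀ t, 0 ≤ t → HasDerivAt y (c * y t) t) (h0 : y 0 = 0) :
    ∀ t, 0 ≤ t → y t = 0 := by
  obtain ⟨A, hA⟩ := exists_eq_mul_exp_of_hasDerivAt_mul continuousOn_const hy
  intro t ht
  rw [hA t ht, h0, zero_mul]

theorem nonneg_of_hasDerivAt_of_pos_of_eq_zero {y y' : ℝ → ℝ}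
    (hy : ∀ t, 0 ≤ t → HasDerivAt y (y' t) t) (h0 : 0 ≤ y 0)
    (hpos : ∀ t, 0 ≤ t → y t = 0 → 0 < y' t) :
    ∀ t, 0 ≤ t → 0 ≤ y t := by
  intro T hT
  have key := image_le_of_deriv_right_lt_deriv_boundary (f := fun t => -y t) (B := 0)
    (fun t ht => (hy t ht.1).continuousAt.neg.continuousWithinAt)
    (fun t ht => (hy t ht.1).neg.hasDerivWithinAt) (by simpa using h0)
    (fun _ => hasDerivAt_const _ 0)
    (fun t ht hyt => by simpa using hpos t ht.1 (neg_eq_zero.mp hyt)) ⟨hT, le_rfl⟩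
  simpa using key

theorem stmt_3_general
    (D s1in s2in : ℝ) (hD : 0 < D) (hs1in : 0 < s1in) (hs2in : 0 < s2in)
    (f1 f2 : ℝ → ℝ → ℝ)
    (hf1C1 : ContDiff ℝ 1 (fun p : ℝ × ℝ => f1 p.1 p.2))
    (hf2C1 : ContDiff ℝ 1 (fun p : ℝ × ℝ => f2 p.1 p.2))
    (hf1nonneg : ∀ u v : ℝ, 0 ≤ f1 u v)
    (hf10 : ∀ v : ℝ, f1 0 v = 0)
    (hf20 : ∀ u : ℝ, f2 u 0 = 0)
    (s1 x1 s2 x2 : ℝ → ℝ)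
    (hode1 : ∀ t : ℝ, 0 ≤ t →
      HasDerivAt s1 (D * (s1in - s1 t) - f1 (s1 t) (s2 t) * x1 t) t)
    (hode2 : ∀ t : ℝ, 0 ≤ t →
      HasDerivAt x1 ((f1 (s1 t) (s2 t) - D) * x1 t) t)
    (hode3 : ∀ t : ℝ, 0 ≤ t →
      HasDerivAt s2 (D * (s2in - s2 t) - f2 (s1 t) (s2 t) * x2 t
        + f1 (s1 t) (s2 t) * x1 t) t)
    (hode4 : ∀ t : ℝ, 0 ≤ t →
      HasDerivAt x2 ((f2 (s1 t) (s2 t) - D) * x2 t) t)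
    (hinit : 0 ≤ s1 0 ∧ 0 ≤ x1 0 ∧ 0 ≤ s2 0 ∧ 0 ≤ x2 0)
    (hΩ1 : s1 0 + x1 0 = s1in)
    (hΩ2 : s2 0 + x2 0 = x1 0 + s2in) :
    ∀ t : ℝ, 0 ≤ t →
      (0 ≤ s1 t ∧ 0 ≤ x1 t ∧ 0 ≤ s2 t ∧ 0 ≤ x2 t) ∧
      s1 t + x1 t = s1in ∧ s2 t + x2 t = x1 t + s2in := by
  have hs : ContinuousOn (fun t => (s1 t, s2 t)) (Ici 0) := fun t ht =>
    ((hode1 t ht).continuousAt.prodMk (hode3 t ht).continuousAt).continuousWithinAt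
  have hx1 := nonneg_of_hasDerivAt_mul
    ((hf1C1.continuous.comp_continuousOn hs).sub continuousOn_const) hode2 hinit.2.1
  have hx2 := nonneg_of_hasDerivAt_mul
    ((hf2C1.continuous.comp_continuousOn hs).sub continuousOn_const) hode4 hinit.2.2.2
  have hs1 := nonneg_of_hasDerivAt_of_pos_of_eq_zero hode1 hinit.1 fun t _ h => by
    rw [h, hf10]
    nlinarith
  have hs2 := nonneg_of_hasDerivAt_of_pos_of_eq_zero hode3 hinit.2.2.1 fun t ht h => by
    rw [h, hf20]
    nlinarith [mul_nonneg (hf1nonneg (s1 t) 0) (hx1 t ht)]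
  have hc1 := eq_zero_of_hasDerivAt_const_mul (c := -D) (y := fun t => s1 t + x1 t - s1in)
    (fun t ht => (((hode1 t ht).add (hode2 t ht)).sub_const s1in).congr_deriv (by ring))
    (by simp [hΩ1])
  have hc2 := eq_zero_of_hasDerivAt_const_mul (c := -D) (y := fun t => s2 t + x2 t - x1 t - s2in)
    (fun t ht =>
      ((((hode3 t ht).add (hode4 t ht)).sub (hode2 t ht)).sub_const s2in).congr_deriv (by ring))
    (by simp [hΩ2])
  intro t ht
  exact ⟨⟨hs1 t ht, hx1 t ht, hs2 t ht, hx2 t ht⟩, by linarith [hc1 t ht], by linarith [hc2 t ht]⟩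

/-- The set Ω = {(s1,x1,s2,x2) ∈ ℝ₊⁴ : s1 + x1 = s1in, s2 + x2 = x1 + s2in}
is positively invariant for the chemostat system. -/
theorem stmt_3
    (D s1in s2in : ℝ) (hD : 0 < D) (hs1in : 0 < s1in) (hs2in : 0 < s2in)
    (f1 f2 : ℝ → ℝ → ℝ)
    (hf1C1 : ContDiff ℝ 1 (fun p : ℝ × ℝ => f1 p.1 p.2))
    (hf2C1 : ContDiff ℝ 1 (fun p : ℝ × ℝ => f2 p.1 p.2))
    (hf1nonneg : ∀ u v : ℝ, 0 ≤ f1 u v)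
    (hf2nonneg : ∀ u v : ℝ, 0 ≤ f2 u v)
    (hf10 : ∀ v : ℝ, f1 0 v = 0)
    (hf20 : ∀ u : ℝ, f2 u 0 = 0)
    (s1 x1 s2 x2 : ℝ → ℝ)
    (hode1 : ∀ t : ℝ, 0 ≤ t →
      HasDerivAt s1 (D * (s1in - s1 t) - f1 (s1 t) (s2 t) * x1 t) t)
    (hode2 : ∀ t : ℝ, 0 ≤ t →
      HasDerivAt x1 ((f1 (s1 t) (s2 t) - D) * x1 t) t)
    (hode3 : ∀ t : ℝ, 0 ≤ t →
      HasDerivAt s2 (D * (s2in - s2 t) - f2 (s1 t) (s2 t) * x2 t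
        + f1 (s1 t) (s2 t) * x1 t) t)
    (hode4 : ∀ t : ℝ, 0 ≤ t →
      HasDerivAt x2 ((f2 (s1 t) (s2 t) - D) * x2 t) t)
    (hinit : 0 ≤ s1 0 ∧ 0 ≤ x1 0 ∧ 0 ≤ s2 0 ∧ 0 ≤ x2 0)
    (hΩ1 : s1 0 + x1 0 = s1in)
    (hΩ2 : s2 0 + x2 0 = x1 0 + s2in) :
    ∀ t : ℝ, 0 ≤ t →
      (0 ≤ s1 t ∧ 0 ≤ x1 t ∧ 0 ≤ s2 t ∧ 0 ≤ x2 t) ∧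
      s1 t + x1 t = s1in ∧ s2 t + x2 t = x1 t + s2in :=
  stmt_3_general D s1in s2in hD hs1in hs2in f1 f2 hf1C1 hf2C1 hf1nonneg hf10 hf20 s1 x1 s2 x2 hode1
    hode2 hode3 hode4 hinit hΩ1 hΩ2
end

section
/- For the transformed system ξ1' = h1(ξ1,ξ2) := f1(s1in - e^{ξ1}, s2in + e^{ξ1} - e^{ξ2}) - D, ξ2' = h2(ξ1,ξ2) := f2(s1in - e^{ξ1}, s2in + e^{ξ1} - e^{ξ2}) - D, the divergence satisfies ∂h1/∂ξ1 + ∂h2/∂ξ2 = e^{ξ1}(-∂f1/∂s1 + ∂f1/∂s2) - e^{ξ2} ∂f2/∂s2 < 0 at every point where s1in - e^{ξ1} > 0 and s2in + e^{ξ1} - e^{ξ2} > 0. -/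
open Real

/-! In the logarithmic coordinates `ξᵢ`, moving `ξ1` changes `s` in the direction `e^{ξ1} (-1, 1)` and
moving `ξ2` changes it in the direction `e^{ξ2} (0, -1)`, so the chain rule gives the divergence formula.
Its three terms are negative by the monotonicity assumptions on `∂f1/∂s1`, `∂f1/∂s2` and `∂f2/∂s2`. -/

theorem ContinuousLinearMap.apply_prod_eq_smul_add_smul {𝕜 E : Type*} [Semiring 𝕜]
    [TopologicalSpace 𝕜] [AddCommMonoid E] [Module 𝕜 E] [TopologicalSpace E]
    (L : 𝕜 × 𝕜 →L[𝕜] E) (x y : 𝕜) : L (x, y) = x • L (1, 0) + y • L (0, 1) := by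
  rw [← map_smul, ← map_smul, ← map_add]
  simp

section ExpCoordinates

variable {G : Type*} [NormedAddCommGroup G] [NormedSpace ℝ G] {F : ℝ × ℝ → G}
  {L : ℝ × ℝ →L[ℝ] G}

theorem hasDerivAt_comp_sub_exp_add_exp (a b c u : ℝ)
    (hF : HasFDerivAt F L (a - exp u, b + exp u - c)) :
    HasDerivAt (fun u => F (a - exp u, b + exp u - c)) (exp u • (-L (1, 0) + L (0, 1))) u := by
  have hcurve : HasDerivAt (fun u => (a - exp u, b + exp u - c)) (-exp u, exp u) u :=
    ((hasDerivAt_exp u).const_sub a).prodMk (((hasDerivAt_exp u).const_add b).sub_const c)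
  refine (hF.comp_hasDerivAt u hcurve).congr_deriv ?_
  rw [L.apply_prod_eq_smul_add_smul, smul_add, smul_neg, neg_smul]

theorem hasDerivAt_comp_sub_exp (a b v : ℝ) (hF : HasFDerivAt F L (a, b - exp v)) :
    HasDerivAt (fun v => F (a, b - exp v)) (-(exp v • L (0, 1))) v := by
  have hcurve : HasDerivAt (fun v => (a, b - exp v)) (0, -exp v) v :=
    (hasDerivAt_const v a).prodMk ((hasDerivAt_exp v).const_sub b)
  refine (hF.comp_hasDerivAt v hcurve).congr_deriv ?_
  rw [L.apply_prod_eq_smul_add_smul, zero_smul, zero_add, neg_smul]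

end ExpCoordinates

theorem stmt_14_general
    (D s1in s2in : ℝ)
    (f1 f2 : ℝ → ℝ → ℝ)
    (hf1C1 : ContDiff ℝ 1 (fun p : ℝ × ℝ => f1 p.1 p.2))
    (hf2C1 : ContDiff ℝ 1 (fun p : ℝ × ℝ => f2 p.1 p.2))
    (hf1s1 : ∀ p : ℝ × ℝ, 0 < p.1 → 0 < p.2 →
      0 < fderiv ℝ (fun q : ℝ × ℝ => f1 q.1 q.2) p (1, 0))
    (hf1s2 : ∀ p : ℝ × ℝ, 0 < p.1 → 0 < p.2 →
      fderiv ℝ (fun q : ℝ × ℝ => f1 q.1 q.2) p (0, 1) < 0)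
    (hf2s2 : ∀ p : ℝ × ℝ, 0 < p.1 → 0 < p.2 →
      0 < fderiv ℝ (fun q : ℝ × ℝ => f2 q.1 q.2) p (0, 1))
    (h1 h2 : ℝ → ℝ → ℝ)
    (hh1 : h1 = fun ξ1 ξ2 =>
      f1 (s1in - Real.exp ξ1) (s2in + Real.exp ξ1 - Real.exp ξ2) - D)
    (hh2 : h2 = fun ξ1 ξ2 =>
      f2 (s1in - Real.exp ξ1) (s2in + Real.exp ξ1 - Real.exp ξ2) - D) :
    ∀ ξ1 ξ2 : ℝ, 0 < s1in - Real.exp ξ1 → 0 < s2in + Real.exp ξ1 - Real.exp ξ2 →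
      deriv (fun u => h1 u ξ2) ξ1 + deriv (fun v => h2 ξ1 v) ξ2 =
        Real.exp ξ1 *
          (-(fderiv ℝ (fun q : ℝ × ℝ => f1 q.1 q.2)
              (s1in - Real.exp ξ1, s2in + Real.exp ξ1 - Real.exp ξ2) (1, 0)) +
            fderiv ℝ (fun q : ℝ × ℝ => f1 q.1 q.2)
              (s1in - Real.exp ξ1, s2in + Real.exp ξ1 - Real.exp ξ2) (0, 1)) -
        Real.exp ξ2 *
          (fderiv ℝ (fun q : ℝ × ℝ => f2 q.1 q.2)
              (s1in - Real.exp ξ1, s2in + Real.exp ξ1 - Real.exp ξ2) (0, 1)) ∧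
      deriv (fun u => h1 u ξ2) ξ1 + deriv (fun v => h2 ξ1 v) ξ2 < 0 := by
  intro ξ1 ξ2 hs1 hs2
  subst hh1 hh2
  set p : ℝ × ℝ := (s1in - exp ξ1, s2in + exp ξ1 - exp ξ2)
  have hdiv : deriv (fun u => f1 (s1in - exp u) (s2in + exp u - exp ξ2) - D) ξ1 +
      deriv (fun v => f2 (s1in - exp ξ1) (s2in + exp ξ1 - exp v) - D) ξ2 =
      exp ξ1 * (-(fderiv ℝ (fun q : ℝ × ℝ => f1 q.1 q.2) p (1, 0)) +
        fderiv ℝ (fun q : ℝ × ℝ => f1 q.1 q.2) p (0, 1)) -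
      exp ξ2 * fderiv ℝ (fun q : ℝ × ℝ => f2 q.1 q.2) p (0, 1) := by
    rw [deriv_sub_const, deriv_sub_const,
      (hasDerivAt_comp_sub_exp_add_exp (F := fun q : ℝ × ℝ => f1 q.1 q.2) _ _ _ _
        (hf1C1.differentiable one_ne_zero p).hasFDerivAt).deriv,
      (hasDerivAt_comp_sub_exp (F := fun q : ℝ × ℝ => f2 q.1 q.2) _ _ _
        (hf2C1.differentiable one_ne_zero p).hasFDerivAt).deriv]
    simp only [smul_eq_mul, sub_eq_add_neg]
  refine ⟨hdiv, hdiv ▸ ?_⟩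
  have hterm1 := mul_neg_of_pos_of_neg (exp_pos ξ1)
    (add_neg (neg_neg_of_pos (hf1s1 p hs1 hs2)) (hf1s2 p hs1 hs2))
  have hterm2 := mul_pos (exp_pos ξ2) (hf2s2 p hs1 hs2)
  linarith

/-- For h1(ξ1,ξ2) = f1(s1in - e^{ξ1}, s2in + e^{ξ1} - e^{ξ2}) - D and
h2(ξ1,ξ2) = f2(s1in - e^{ξ1}, s2in + e^{ξ1} - e^{ξ2}) - D, the divergence
∂h1/∂ξ1 + ∂h2/∂ξ2 = e^{ξ1}(-∂f1/∂s1 + ∂f1/∂s2) - e^{ξ2} ∂f2/∂s2 < 0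
wherever s1in - e^{ξ1} > 0 and s2in + e^{ξ1} - e^{ξ2} > 0. -/
theorem stmt_14
    (D s1in s2in : ℝ) (hD : 0 < D) (hs1in : 0 < s1in) (hs2in : 0 < s2in)
    (f1 f2 : ℝ → ℝ → ℝ)
    (hf1C1 : ContDiff ℝ 1 (fun p : ℝ × ℝ => f1 p.1 p.2))
    (hf2C1 : ContDiff ℝ 1 (fun p : ℝ × ℝ => f2 p.1 p.2))
    (hf1s1 : ∀ p : ℝ × ℝ, 0 < p.1 → 0 < p.2 →
      0 < fderiv ℝ (fun q : ℝ × ℝ => f1 q.1 q.2) p (1, 0))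
    (hf1s2 : ∀ p : ℝ × ℝ, 0 < p.1 → 0 < p.2 →
      fderiv ℝ (fun q : ℝ × ℝ => f1 q.1 q.2) p (0, 1) < 0)
    (hf2s1 : ∀ p : ℝ × ℝ, 0 < p.1 → 0 < p.2 →
      fderiv ℝ (fun q : ℝ × ℝ => f2 q.1 q.2) p (1, 0) < 0)
    (hf2s2 : ∀ p : ℝ × ℝ, 0 < p.1 → 0 < p.2 →
      0 < fderiv ℝ (fun q : ℝ × ℝ => f2 q.1 q.2) p (0, 1))
    (h1 h2 : ℝ → ℝ → ℝ)
    (hh1 : h1 = fun ξ1 ξ2 =>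
      f1 (s1in - Real.exp ξ1) (s2in + Real.exp ξ1 - Real.exp ξ2) - D)
    (hh2 : h2 = fun ξ1 ξ2 =>
      f2 (s1in - Real.exp ξ1) (s2in + Real.exp ξ1 - Real.exp ξ2) - D) :
    ∀ ξ1 ξ2 : ℝ, 0 < s1in - Real.exp ξ1 → 0 < s2in + Real.exp ξ1 - Real.exp ξ2 →
      deriv (fun u => h1 u ξ2) ξ1 + deriv (fun v => h2 ξ1 v) ξ2 =
        Real.exp ξ1 *
          (-(fderiv ℝ (fun q : ℝ × ℝ => f1 q.1 q.2)
              (s1in - Real.exp ξ1, s2in + Real.exp ξ1 - Real.exp ξ2) (1, 0)) +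
            fderiv ℝ (fun q : ℝ × ℝ => f1 q.1 q.2)
              (s1in - Real.exp ξ1, s2in + Real.exp ξ1 - Real.exp ξ2) (0, 1)) -
        Real.exp ξ2 *
          (fderiv ℝ (fun q : ℝ × ℝ => f2 q.1 q.2)
              (s1in - Real.exp ξ1, s2in + Real.exp ξ1 - Real.exp ξ2) (0, 1)) ∧
      deriv (fun u => h1 u ξ2) ξ1 + deriv (fun v => h2 ξ1 v) ξ2 < 0 :=
  stmt_14_general D s1in s2in f1 f2 hf1C1 hf2C1 hf1s1 hf1s2 hf2s2 h1 h2 hh1 hh2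
end
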